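/- Let V be the real vector space of polynomials in ℝ[x,y] of total degree at most 8, and let r : V → ℝ be the unique linear functional whose values on monomials x^i y^j (i + j ≤ 8) are given by the symmetric table: r(1)=1, r(x²)=r(y²)=1, r(x²y²)=1, r(x³y³)=1, r(x⁴)=r(y⁴)=2, r(x⁴y²)=r(x²y⁴)=2, r(x⁶)=r(y⁶)=5, r(x⁶y²)=r(x²y⁶)=6, r(x⁵y³)=r(x³y⁵)=4, r(x⁴y⁴)=5, r(x⁷y)=r(xy⁷)=1, r(x⁸)=r(y⁸)=14, and r(x^i y^j)=0 for all other monomials with i + j ≤ 8. Then r(F) = 0, r(H) = 0, and r(f_α) = 1 for every α ∈ A, where f_α are the density polynomials: f₀ = (xy+1)(x²−1)(x²−4); f_α = (x²+y²−3)x(x+α)(x²−4) for α = ±1; f_α = (xy+1)x(x²−1)(x+α) for α = ±2; and f_α = (x−y)(1+εx+εy)(x−α^τ) for α = εη with ε ∈ {±1}, η ∈ {φ, φ^τ}. -/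
import Mathlib


noncomputable def phi : ℝ := (1 + Real.sqrt 5) / 2
noncomputable def phiTau : ℝ := (1 - Real.sqrt 5) / 2

/-- The table of values `r(x^i y^j)` for `i + j ≤ 8` from the paper (extended by zero). -/
def tab : ℕ → ℕ → ℝ
  | 0, 0 => 1
  | 2, 0 => 1 | 0, 2 => 1
  | 2, 2 => 1
  | 3, 3 => 1
  | 4, 0 => 2 | 0, 4 => 2
  | 4, 2 => 2 | 2, 4 => 2
  | 6, 0 => 5 | 0, 6 => 5
  | 6, 2 => 6 | 2, 6 => 6
  | 5, 3 => 4 | 3, 5 => 4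
  | 4, 4 => 5
  | 7, 1 => 1 | 1, 7 => 1
  | 8, 0 => 14 | 0, 8 => 14
  | _, _ => 0

/-- The unique linear functional on polynomials of total degree at most `8` whose value on
the monomial `x^i y^j` is `tab i j`. -/
noncomputable def rres (p : MvPolynomial (Fin 2) ℝ) : ℝ :=
  ∑ m ∈ p.support, p.coeff m * tab (m 0) (m 1)

/-- The variable `x` of `ℝ[x,y]`. -/
noncomputable def xR : MvPolynomial (Fin 2) ℝ := MvPolynomial.X 0
/-- The variable `y` of `ℝ[x,y]`. -/
noncomputable def yR : MvPolynomial (Fin 2) ℝ := MvPolynomial.X 1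

/-- `F(x,y) = (x-y)²((x-y)² - 5)` as an element of `ℝ[x,y]`. -/
noncomputable def Fpoly : MvPolynomial (Fin 2) ℝ := (xR - yR) ^ 2 * ((xR - yR) ^ 2 - 5)
/-- `H(x,y) = (xy+1)x²(x²-1)(x²-4)` as an element of `ℝ[x,y]`. -/
noncomputable def Hpoly : MvPolynomial (Fin 2) ℝ :=
  (xR * yR + 1) * xR ^ 2 * (xR ^ 2 - 1) * (xR ^ 2 - 4)
/-- `f₀(x,y) = (xy+1)(x²-1)(x²-4)`. -/
noncomputable def f0poly : MvPolynomial (Fin 2) ℝ := (xR * yR + 1) * (xR ^ 2 - 1) * (xR ^ 2 - 4)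
/-- `f_α(x,y) = (x²+y²-3)x(x+α)(x²-4)` for `α = ±1`. -/
noncomputable def f1poly (α : ℝ) : MvPolynomial (Fin 2) ℝ :=
  (xR ^ 2 + yR ^ 2 - 3) * xR * (xR + MvPolynomial.C α) * (xR ^ 2 - 4)
/-- `f_α(x,y) = (xy+1)x(x²-1)(x+α)` for `α = ±2`. -/
noncomputable def f2poly (α : ℝ) : MvPolynomial (Fin 2) ℝ :=
  (xR * yR + 1) * xR * (xR ^ 2 - 1) * (xR + MvPolynomial.C α)
/-- `f_α(x,y) = (x-y)(1+εx+εy)(x-α^τ)` for `α = εη`, `η ∈ {φ, φ^τ}`, `α^τ = εη^τ`. -/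
noncomputable def fgoldpoly (ε ατ : ℝ) : MvPolynomial (Fin 2) ℝ :=
  (xR - yR) * (1 + MvPolynomial.C ε * xR + MvPolynomial.C ε * yR) * (xR - MvPolynomial.C ατ)

/-! ### Auxiliary lemmas for computing `rres` -/

/-- A single term `a · x^i y^j`. -/
noncomputable def Tm (a : ℝ) (i j : ℕ) : MvPolynomial (Fin 2) ℝ :=
  MvPolynomial.C a * xR ^ i * yR ^ j

lemma rres_eq_sum_of_subset (p : MvPolynomial (Fin 2) ℝ) {s : Finset ((Fin 2) →₀ ℕ)}
    (h : p.support ⊆ s) :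
    rres p = ∑ m ∈ s, p.coeff m * tab (m 0) (m 1) := by
  refine Finset.sum_subset h ?_
  intro m _ hm
  rw [MvPolynomial.notMem_support_iff.mp hm, zero_mul]

lemma rres_add (p q : MvPolynomial (Fin 2) ℝ) : rres (p + q) = rres p + rres q := by
  rw [rres_eq_sum_of_subset (p + q)
      (fun m hm => MvPolynomial.support_add hm),
    rres_eq_sum_of_subset p (Finset.subset_union_left (s₂ := q.support)),
    rres_eq_sum_of_subset q (Finset.subset_union_right (s₁ := p.support)),
    ← Finset.sum_add_distrib]
  refine Finset.sum_congr rfl fun m _ => ?_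
  rw [MvPolynomial.coeff_add, add_mul]

lemma rres_monomial (m : (Fin 2) →₀ ℕ) (a : ℝ) :
    rres (MvPolynomial.monomial m a) = a * tab (m 0) (m 1) := by
  rcases eq_or_ne a 0 with rfl | h
  · simp [rres]
  · rw [rres, MvPolynomial.support_monomial, if_neg h, Finset.sum_singleton,
      MvPolynomial.coeff_monomial, if_pos rfl]

lemma rres_Tm (a : ℝ) (i j : ℕ) : rres (Tm a i j) = a * tab i j := by
  have h : Tm a i j = MvPolynomial.monomial (Finsupp.single 0 i + Finsupp.single 1 j) a := by
    rw [Tm, xR, yR, MvPolynomial.X_pow_eq_monomial, MvPolynomial.X_pow_eq_monomial,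
      mul_assoc, MvPolynomial.monomial_mul, MvPolynomial.C_mul_monomial, mul_one, mul_one]
  rw [h, rres_monomial]
  congr 2 <;> simp

theorem residue_values' :
    rres Fpoly = 0 ∧ rres Hpoly = 0 ∧ rres f0poly = 1 ∧
    (∀ α : ℝ, α = 1 ∨ α = -1 → rres (f1poly α) = 1) ∧
    (∀ α : ℝ, α = 2 ∨ α = -2 → rres (f2poly α) = 1) ∧
    (∀ ε η ητ : ℝ, (ε = 1 ∨ ε = -1) →
      ((η = phi ∧ ητ = phiTau) ∨ (η = phiTau ∧ ητ = phi)) →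
        rres (fgoldpoly ε (ε * ητ)) = 1) := by
  have tab40 : tab 4 0 = 2 := rfl
  have tab31 : tab 3 1 = 0 := rfl
  have tab22 : tab 2 2 = 1 := rfl
  have tab13 : tab 1 3 = 0 := rfl
  have tab04 : tab 0 4 = 2 := rfl
  have tab20 : tab 2 0 = 1 := rfl
  have tab11 : tab 1 1 = 0 := rfl
  have tab02 : tab 0 2 = 1 := rfl
  have tab71 : tab 7 1 = 1 := rfl
  have tab51 : tab 5 1 = 0 := rfl
  have tab60 : tab 6 0 = 5 := rfl
  have tab00 : tab 0 0 = 1 := rfl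
  have tab50 : tab 5 0 = 0 := rfl
  have tab30 : tab 3 0 = 0 := rfl
  have tab42 : tab 4 2 = 2 := rfl
  have tab32 : tab 3 2 = 0 := rfl
  have tab12 : tab 1 2 = 0 := rfl
  have tab10 : tab 1 0 = 0 := rfl
  have tab41 : tab 4 1 = 0 := rfl
  have tab21 : tab 2 1 = 0 := rfl
  have tab01 : tab 0 1 = 0 := rfl
  refine ⟨?_, ?_, ?_, ?_, ?_, ?_⟩
  · have h : Fpoly = Tm 1 4 0 + Tm (-4) 3 1 + Tm 6 2 2 + Tm (-4) 1 3 + Tm 1 0 4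
        + Tm (-5) 2 0 + Tm 10 1 1 + Tm (-5) 0 2 := by
      unfold Fpoly Tm
      simp only [map_neg, map_one, map_ofNat]
      ring
    rw [h]; simp only [rres_add, rres_Tm, tab40, tab31, tab22, tab13, tab04, tab20, tab11, tab02]
    ring
  · have h : Hpoly = Tm 1 7 1 + Tm (-5) 5 1 + Tm 4 3 1 + Tm 1 6 0 + Tm (-5) 4 0
        + Tm 4 2 0 := by
      unfold Hpoly Tm
      simp only [map_neg, map_one, map_ofNat]
      ring
    rw [h]; simp only [rres_add, rres_Tm, tab71, tab51, tab31, tab60, tab40, tab20]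
    ring
  · have h : f0poly = Tm 1 5 1 + Tm (-5) 3 1 + Tm 4 1 1 + Tm 1 4 0 + Tm (-5) 2 0
        + Tm 4 0 0 := by
      unfold f0poly Tm
      simp only [map_neg, map_one, map_ofNat]
      ring
    rw [h]; simp only [rres_add, rres_Tm, tab51, tab31, tab11, tab40, tab20, tab00]
    ring
  · intro α _
    have h : f1poly α = Tm 1 6 0 + Tm α 5 0 + Tm (-7) 4 0 + Tm (-7*α) 3 0
        + Tm 1 4 2 + Tm α 3 2 + Tm (-4) 2 2 + Tm (-4*α) 1 2 + Tm 12 2 0 + Tm (12*α) 1 0 := by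
      unfold f1poly Tm
      simp only [map_neg, map_one, map_ofNat, map_mul]
      ring
    rw [h]
    simp only [rres_add, rres_Tm, tab60, tab50, tab40, tab30, tab42, tab32, tab22, tab12,
      tab20, tab10]
    ring
  · intro α _
    have h : f2poly α = Tm 1 5 1 + Tm α 4 1 + Tm (-1) 3 1 + Tm (-α) 2 1 + Tm 1 4 0
        + Tm α 3 0 + Tm (-1) 2 0 + Tm (-α) 1 0 := by
      unfold f2poly Tm
      simp only [map_neg, map_one, map_ofNat]
      ring
    rw [h]
    simp only [rres_add, rres_Tm, tab51, tab41, tab31, tab21, tab40, tab30, tab20, tab10]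
    ring
  · intro ε η ητ _ _
    set c : ℝ := ε * ητ with hc
    have h : fgoldpoly ε c = Tm ε 3 0 + Tm 1 2 0 + Tm (-1) 1 1 + Tm (-ε) 1 2
        + Tm (-(c*ε)) 2 0 + Tm (c*ε) 0 2 + Tm (-c) 1 0 + Tm c 0 1 := by
      unfold fgoldpoly Tm
      simp only [map_neg, map_one, map_mul]
      ring
    rw [h]
    simp only [rres_add, rres_Tm, tab30, tab20, tab11, tab12, tab02, tab10, tab01]
    ring

/-- With `r` the linear functional on polynomials of degree at most `8` given by the table
of the paper, one has `r(F) = 0`, `r(H) = 0`, and `r(f_α) = 1` for every `α ∈ A`. -/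
theorem residue_values :
    rres Fpoly = 0 ∧ rres Hpoly = 0 ∧ rres f0poly = 1 ∧
    (∀ α : ℝ, α = 1 ∨ α = -1 → rres (f1poly α) = 1) ∧
    (∀ α : ℝ, α = 2 ∨ α = -2 → rres (f2poly α) = 1) ∧
    (∀ ε η ητ : ℝ, (ε = 1 ∨ ε = -1) →
      ((η = phi ∧ ητ = phiTau) ∨ (η = phiTau ∧ ητ = phi)) →
        rres (fgoldpoly ε (ε * ητ)) = 1) := by
  exact residue_values'
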